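/- arXiv:math/0505102 — 3 statements merged into one kernel-verified Lean document; each statement's English description precedes it below -/
import Mathlib

section
/- Let V be a finite-dimensional complex vector space with a nondegenerate alternating bilinear form ω, and let sp(V,ω) = {X ∈ End(V) : ω(Xu,w) + ω(u,Xw) = 0 for all u,w}. Then for every nonzero v ∈ V, the subspace {X v : X ∈ sp(V,ω)} equals all of V. -/
/-!
For `a, b ∈ V` the rank-two maps `u ↦ ω(a,u) b + ω(b,u) a` and `u ↦ ω(a,u) a` are skew-adjoint
for an alternating form `ω`. Given `v ≠ 0`, nondegeneracy provides `a` with `c := ω(a,v) ≠ 0`,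
and then `c⁻¹ (ω(a,·) w + ω(w,·) a) - ω(w,v) c⁻² ω(a,·) a` sends `v` to an arbitrary `w`.
-/

namespace LinearMap.IsAlt

section CommRing

variable {R M : Type*} [CommRing R] [AddCommGroup M] [Module R M] {ω : M →ₗ[R] M →ₗ[R] R}

theorem smulRight_add_smulRight_mem_skewAdjointSubmodule (hω : ω.IsAlt) (a b : M) :
    (ω a).smulRight b + (ω b).smulRight a ∈ ω.skewAdjointSubmodule := by
  rw [mem_skewAdjointSubmodule]
  intro u u'
  simp only [add_apply, Pi.neg_apply, smulRight_apply, map_add, map_smul, map_neg, smul_apply,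
    smul_eq_mul, ← hω.neg u b, ← hω.neg u a]
  ring

theorem smulRight_self_mem_skewAdjointSubmodule (hω : ω.IsAlt) (a : M) :
    (ω a).smulRight a ∈ ω.skewAdjointSubmodule := by
  rw [mem_skewAdjointSubmodule]
  intro u u'
  simp only [Pi.neg_apply, smulRight_apply, map_neg, map_smul, smul_apply, smul_eq_mul,
    ← hω.neg u a]
  ring

end CommRing

variable {K V : Type*} [Field K] [AddCommGroup V] [Module K V] {ω : V →ₗ[K] V →ₗ[K] K}

theorem exists_mem_skewAdjointSubmodule_apply_eq (hω : ω.IsAlt) {a v : V} (hav : ω a v ≠ 0)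
    (w : V) : ∃ X ∈ ω.skewAdjointSubmodule, X v = w := by
  set c := ω a v
  refine ⟨c⁻¹ • ((ω a).smulRight w + (ω w).smulRight a) + (-(ω w v) / c ^ 2) • (ω a).smulRight a,
    add_mem (Submodule.smul_mem _ _ (hω.smulRight_add_smulRight_mem_skewAdjointSubmodule a w))
      (Submodule.smul_mem _ _ (hω.smulRight_self_mem_skewAdjointSubmodule a)), ?_⟩
  simp only [add_apply, smul_apply, smulRight_apply, smul_add, smul_smul]
  match_scalars <;> field_simp <;> ring

end LinearMap.IsAlt

theorem stmt3_general {V : Type*} [AddCommGroup V] [Module ℂ V]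
    (ω : V →ₗ[ℂ] V →ₗ[ℂ] ℂ) (halt : ∀ u : V, ω u u = 0)
    (hnd : ∀ u : V, (∀ w : V, ω u w = 0) → u = 0) :
    ∀ v : V, v ≠ 0 →
      {w : V | ∃ X : V →ₗ[ℂ] V, (∀ u u' : V, ω (X u) u' + ω u (X u') = 0) ∧ X v = w}
        = Set.univ := by
  have hω : ω.IsAlt := halt
  intro v hv
  obtain ⟨a, hav⟩ : ∃ a, ω a v ≠ 0 := by
    by_contra! h
    exact hv (hnd v fun w ↦ by rw [← hω.neg, h, neg_zero])
  refine Set.eq_univ_of_forall fun w ↦ ?_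
  obtain ⟨X, hX, rfl⟩ := hω.exists_mem_skewAdjointSubmodule_apply_eq hav w
  refine ⟨X, fun u u' ↦ ?_, rfl⟩
  rw [LinearMap.mem_skewAdjointSubmodule] at hX
  simp [hX u u']

/-- For a nondegenerate alternating form `ω` on `V`, the symplectic Lie algebra
moves every nonzero vector in all directions: `{X v : X ∈ sp(V,ω)} = V` for `v ≠ 0`. -/
theorem stmt3 {V : Type*} [AddCommGroup V] [Module ℂ V] [FiniteDimensional ℂ V]
    (ω : V →ₗ[ℂ] V →ₗ[ℂ] ℂ) (halt : ∀ u : V, ω u u = 0)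
    (hnd : ∀ u : V, (∀ w : V, ω u w = 0) → u = 0) :
    ∀ v : V, v ≠ 0 →
      {w : V | ∃ X : V →ₗ[ℂ] V, (∀ u u' : V, ω (X u) u' + ω u (X u') = 0) ∧ X v = w}
        = Set.univ :=
  stmt3_general ω halt hnd
end

section
/- For every n ≥ 2 there exists an antisymmetric n×n complex matrix S₀ such that {A S₀ + S₀ Aᵀ : A upper triangular n×n} equals the full space of antisymmetric n×n complex matrices. -/
/-!
Take for `S₀` the signed matrix of an involution `p` of the indices, with entry `±1` at `(p j, j)`
according as `p j < j` or `p j > j`. Then `S₀ᵀ = -S₀`, so `A S₀ + S₀ Aᵀ = A S₀ - (A S₀)ᵀ`, and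
`S₀ S₀ = -1` away from the fixed points of `p`. An antisymmetric `M` is `U - Uᵀ` for its strictly
upper part `U`; if the only possible fixed point is the least index, whose column of `U` vanishes,
then `A = -U S₀` satisfies `A S₀ = U`. The entry `A i k = ∓U i (p k)` vanishes for `k < i` as soon
as `p` never moves an index past a larger one, which holds when `p` swaps neighbours.
-/

open Matrix Function

namespace Matrix

variable {ι R : Type*} [CommRing R]

lemma mul_add_mul_transpose_eq_sub [Fintype ι] {S : Matrix ι ι R} (hS : Sᵀ = -S)
    (A : Matrix ι ι R) : A * S + S * Aᵀ = A * S - (A * S)ᵀ := by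
  rw [transpose_mul, hS, Matrix.neg_mul, sub_neg_eq_add]

variable [LinearOrder ι]

def strictUpper (M : Matrix ι ι R) : Matrix ι ι R :=
  of fun i j => if i < j then M i j else 0

lemma eq_strictUpper_sub_transpose [IsAddTorsionFree R] {M : Matrix ι ι R} (hM : Mᵀ = -M) :
    M = M.strictUpper - M.strictUpperᵀ := by
  ext i j
  have hji : M j i = -M i j := by simpa using congrFun (congrFun hM i) j
  rcases lt_trichotomy i j with h | rfl | h
  · simp [strictUpper, h, h.not_gt]
  · simpa [strictUpper] using self_eq_neg.mp hji
  · simp [strictUpper, h, h.not_gt, hji]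

def orderSign (k j : ι) : R := if k < j then 1 else if j < k then -1 else 0

lemma orderSign_swap (k j : ι) : (orderSign j k : R) = -orderSign k j := by
  unfold orderSign
  rcases lt_trichotomy k j with h | rfl | h
  · simp [h, h.not_gt]
  · simp
  · simp [h, h.not_gt]

lemma orderSign_mul_self {k j : ι} (h : k ≠ j) : (orderSign k j : R) * orderSign k j = 1 := by
  unfold orderSign
  rcases h.lt_or_gt with h | h <;> simp [h, h.not_gt]

def pairingMatrix (p : ι → ι) : Matrix ι ι R :=
  of fun k j => if k = p j then orderSign k j else 0

variable {p : ι → ι}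

lemma transpose_pairingMatrix (hp : Involutive p) :
    (pairingMatrix p : Matrix ι ι R)ᵀ = -pairingMatrix p := by
  ext k j
  simp only [transpose_apply, neg_apply, pairingMatrix, of_apply, eq_comm (a := j), hp.eq_iff]
  split_ifs with h
  · rw [orderSign_swap]
  · rw [neg_zero]

lemma mul_pairingMatrix_apply [Fintype ι] (A : Matrix ι ι R) (i j : ι) :
    (A * pairingMatrix p : Matrix ι ι R) i j = A i (p j) * orderSign (p j) j := by
  simp [mul_apply, pairingMatrix]

variable [Fintype ι]

lemma strictUpper_mul_pairingMatrix_apply_of_lt (hsucc : ∀ k i, k < i → p k ≤ i)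
    (M : Matrix ι ι R) {i k : ι} (h : k < i) :
    (M.strictUpper * pairingMatrix p : Matrix ι ι R) i k = 0 := by
  simp [mul_pairingMatrix_apply, strictUpper, (hsucc k i h).not_gt]

lemma strictUpper_mul_pairingMatrix_mul_pairingMatrix (hp : Involutive p)
    (hfix : ∀ j, p j = j → IsBot j) (M : Matrix ι ι R) :
    M.strictUpper * pairingMatrix p * pairingMatrix p = -M.strictUpper := by
  ext i j
  rw [mul_pairingMatrix_apply, mul_pairingMatrix_apply, hp j, mul_assoc, orderSign_swap,
    neg_apply]
  by_cases hj : p j = j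
  · simp [strictUpper, (hfix j hj i).not_gt]
  · rw [neg_mul, orderSign_mul_self hj, mul_neg, mul_one]

theorem setOf_upper_mul_pairingMatrix_add_eq [IsAddTorsionFree R] (hp : Involutive p)
    (hsucc : ∀ k i, k < i → p k ≤ i) (hfix : ∀ j, p j = j → IsBot j) :
    {M : Matrix ι ι R | ∃ A : Matrix ι ι R, (∀ i j, j < i → A i j = 0) ∧
        M = A * pairingMatrix p + pairingMatrix p * Aᵀ} = {M | Mᵀ = -M} := by
  have hS := transpose_pairingMatrix (R := R) hp
  ext M
  constructor
  · rintro ⟨A, -, rfl⟩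
    rw [Set.mem_ofPred_eq, mul_add_mul_transpose_eq_sub hS, transpose_sub, transpose_transpose,
      neg_sub]
  · intro hM
    refine ⟨-(M.strictUpper * pairingMatrix p),
      fun i j h => by rw [neg_apply, strictUpper_mul_pairingMatrix_apply_of_lt hsucc M h, neg_zero],
      ?_⟩
    rw [mul_add_mul_transpose_eq_sub hS, Matrix.neg_mul,
      strictUpper_mul_pairingMatrix_mul_pairingMatrix hp hfix, neg_neg]
    exact eq_strictUpper_sub_transpose hM

end Matrix

/-- Swaps `n - 1 ↔ n - 2`, `n - 3 ↔ n - 4`, …, fixing `0` when `n` is odd (as `0 - 1 = 0` in `ℕ`);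
its `pairingMatrix` is block diagonal with blocks `[[0, 1], [-1, 0]]`, plus a zero block at the top
left when `n` is odd. -/
def topPairing (n : ℕ) (k : Fin n) : Fin n :=
  ⟨if (n + k) % 2 = 1 then k - 1 else k + 1, by have := k.isLt; split_ifs <;> omega⟩

lemma topPairing_involutive (n : ℕ) : Involutive (topPairing n) := by
  intro k
  ext
  simp only [topPairing]
  split_ifs <;> omega

lemma topPairing_le_of_lt {n : ℕ} {k i : Fin n} (h : k < i) : topPairing n k ≤ i := by
  rw [Fin.le_def]
  simp only [topPairing, Fin.lt_def] at h ⊢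
  split_ifs <;> omega

lemma isBot_of_topPairing_eq {n : ℕ} {j : Fin n} (h : topPairing n j = j) : IsBot j := by
  intro i
  rw [Fin.le_def]
  simp only [topPairing, Fin.ext_iff] at h
  split_ifs at h <;> omega

theorem stmt7_general {n : ℕ} :
    ∃ S₀ : Matrix (Fin n) (Fin n) ℂ, S₀.transpose = -S₀ ∧
      {M : Matrix (Fin n) (Fin n) ℂ |
        ∃ A : Matrix (Fin n) (Fin n) ℂ,
          (∀ i j : Fin n, (j : ℕ) < (i : ℕ) → A i j = 0) ∧
          M = A * S₀ + S₀ * A.transpose}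
      = {M : Matrix (Fin n) (Fin n) ℂ | M.transpose = -M} :=
  ⟨pairingMatrix (topPairing n), transpose_pairingMatrix (topPairing_involutive n),
    setOf_upper_mul_pairingMatrix_add_eq (topPairing_involutive n)
      (fun _ _ => topPairing_le_of_lt) (fun _ => isBot_of_topPairing_eq)⟩

/-- For `n ≥ 2` there is an antisymmetric `S₀` with
`{A S₀ + S₀ Aᵀ : A upper triangular}` equal to the space of antisymmetric matrices. -/
theorem stmt7 {n : ℕ} (hn : 2 ≤ n) :
    ∃ S₀ : Matrix (Fin n) (Fin n) ℂ, S₀.transpose = -S₀ ∧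
      {M : Matrix (Fin n) (Fin n) ℂ |
        ∃ A : Matrix (Fin n) (Fin n) ℂ,
          (∀ i j : Fin n, (j : ℕ) < (i : ℕ) → A i j = 0) ∧
          M = A * S₀ + S₀ * A.transpose}
      = {M : Matrix (Fin n) (Fin n) ℂ | M.transpose = -M} :=
  stmt7_general
end

section
/- For every n ≥ 1 there exist a Borel subalgebra b of gl(n,ℂ), a vector v ∈ ℂⁿ and a covector φ ∈ (ℂⁿ)* such that {(Xv + sv, −φ∘X + sφ) : X ∈ b, s ∈ ℂ} = ℂⁿ ⊕ (ℂⁿ)*. -/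
attribute [local instance 100] LieRing.ofAssociativeRing

/-!
Take `b` to be the upper triangular matrices. The bracket of two matrices supported on or above
the `k`-th superdiagonal is supported on or above the `(k+1)`-st (for `k = 0` because upper
triangular matrices commute on the diagonal), so `b` is solvable. A subalgebra `c ⊋ b` contains a
matrix `M` with `M p q ≠ 0` for some `q < p`; bracketing `M` with the diagonal units `E p p` and
`E q q` isolates `E p q`, and together with `E q p ∈ b` this gives an `sl₂`-triple in `c`, which
survives every step of the derived series, so `c` is not solvable.

For the open orbit take `v = e_⊤` and `φ = e_⊥* + e_⊤*`. The matrices `x e_⊤ᵀ` and `e_⊥ yᵀ` are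
upper triangular, and together with the scalar `s` they already move `(v, φ)` to any `(w, ψ)`.
-/

namespace LieAlgebra

variable {R L : Type*} [CommRing R] [LieRing L] [LieAlgebra R L]

lemma derivedSeries_succ (k : ℕ) :
    derivedSeries R L (k + 1) = ⁅derivedSeries R L k, derivedSeries R L k⁆ :=
  derivedSeriesOfIdeal_succ R L ⊤ k

lemma mem_of_mem_derivedSeries_of_lie_mem_succ {F : ℕ → Submodule R L} (hF₀ : F 0 = ⊤)
    (hF : ∀ k, ∀ x ∈ F k, ∀ y ∈ F k, ⁅x, y⁆ ∈ F (k + 1)) {k : ℕ} {x : L}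
    (hx : x ∈ derivedSeries R L k) : x ∈ F k := by
  induction k generalizing x with
  | zero => simp [hF₀]
  | succ k ih =>
    rw [derivedSeries_succ, ← LieSubmodule.mem_toSubmodule,
      LieSubmodule.lieIdeal_oper_eq_linear_span'] at hx
    refine Submodule.span_le.mpr ?_ hx
    rintro _ ⟨y, hy, z, hz, rfl⟩
    exact hF k y (ih hy) z (ih hz)

lemma isSolvable_of_lie_mem_succ {F : ℕ → Submodule R L} (hF₀ : F 0 = ⊤)
    (hF : ∀ k, ∀ x ∈ F k, ∀ y ∈ F k, ⁅x, y⁆ ∈ F (k + 1)) {N : ℕ} (hN : F N = ⊥) :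
    IsSolvable L :=
  IsSolvable.mk (k := N) <| (LieSubmodule.eq_bot_iff _).mpr fun _ hx ↦
    (Submodule.mem_bot R).mp (hN ▸ mem_of_mem_derivedSeries_of_lie_mem_succ hF₀ hF hx)

end LieAlgebra

namespace IsSl2Triple

section Field

variable {K L : Type*} [Field K] [NeZero (2 : K)] [LieRing L] [LieAlgebra K L] {h e f : L}

lemma mem_derivedSeries_succ {k : ℕ} (t : IsSl2Triple h e f)
    (hh : h ∈ LieAlgebra.derivedSeries K L k) (he : e ∈ LieAlgebra.derivedSeries K L k) :
    e ∈ LieAlgebra.derivedSeries K L (k + 1) := by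
  rw [← inv_smul_smul₀ (two_ne_zero (α := K)) e, ← t.lie_h_e_smul K,
    LieAlgebra.derivedSeries_succ]
  exact Submodule.smul_mem _ _ (LieSubmodule.lie_mem_lie hh he)

lemma mem_derivedSeries (t : IsSl2Triple h e f) (k : ℕ) :
    h ∈ LieAlgebra.derivedSeries K L k ∧ e ∈ LieAlgebra.derivedSeries K L k ∧
      f ∈ LieAlgebra.derivedSeries K L k := by
  induction k with
  | zero => simp
  | succ k ih =>
    obtain ⟨hh, he, hf⟩ := ih
    refine ⟨?_, t.mem_derivedSeries_succ hh he, t.symm.mem_derivedSeries_succ (neg_mem hh) hf⟩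
    rw [← t.lie_e_f, LieAlgebra.derivedSeries_succ]
    exact LieSubmodule.lie_mem_lie he hf

end Field

lemma not_isSolvable (K : Type*) {L : Type*} [Field K] [NeZero (2 : K)] [LieRing L]
    [LieAlgebra K L] {h e f : L} (t : IsSl2Triple h e f) : ¬ LieAlgebra.IsSolvable L := fun _ ↦ by
  obtain ⟨k, hk⟩ := LieAlgebra.IsSolvable.solvable K L
  exact t.h_ne_zero <| (LieSubmodule.mem_bot _).mp <| hk ▸ (t.mem_derivedSeries k).1

lemma lieSubalgebra {R L : Type*} [CommRing R] [LieRing L] [LieAlgebra R L]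
    {h e f : L} (t : IsSl2Triple h e f) {c : LieSubalgebra R L} (hh : h ∈ c) (he : e ∈ c)
    (hf : f ∈ c) : IsSl2Triple (⟨h, hh⟩ : c) ⟨e, he⟩ ⟨f, hf⟩ where
  h_ne_zero := by simpa [← Subtype.coe_ne_coe] using t.h_ne_zero
  lie_e_f := Subtype.ext t.lie_e_f
  lie_h_e_nsmul := Subtype.ext t.lie_h_e_nsmul
  lie_h_f_nsmul := Subtype.ext t.lie_h_f_nsmul

end IsSl2Triple

namespace Matrix

section Single

variable {ι R : Type*} [Fintype ι] [DecidableEq ι] [CommRing R]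

lemma isSl2Triple_single [Nontrivial R] {i j : ι} (hij : i ≠ j) :
    IsSl2Triple (single i i (1 : R) - single j j 1) (single i j 1) (single j i 1) where
  h_ne_zero h := by simpa [single_apply, hij.symm] using congr_fun₂ h i i
  lie_e_f := by simp [Ring.lie_def]
  lie_h_e_nsmul := by
    simp [Ring.lie_def, sub_mul, mul_sub, hij.symm, ← single_add, one_add_one_eq_two]
  lie_h_f_nsmul := by
    simp [Ring.lie_def, sub_mul, mul_sub, hij, ← neg_add', ← single_add, one_add_one_eq_two]

lemma lie_single_self_lie_single_self {p q : ι} (hpq : p ≠ q) (M : Matrix ι ι R) :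
    ⁅single p p (1 : R), ⁅M, single q q 1⁆⁆ = single p q (M p q) + single q p (M q p) := by
  rw [Ring.lie_def, Ring.lie_def, mul_sub, sub_mul, ← Matrix.mul_assoc, ← Matrix.mul_assoc,
    single_mul_single_of_ne (c := 1) p p q hpq, Matrix.mul_assoc M,
    single_mul_single_of_ne (c := 1) q q p hpq.symm]
  simp

end Single

section UpperTriangular

variable {R ι : Type*} [CommRing R] [Fintype ι] [LinearOrder ι]

variable (R ι) in
def upperTriangularLieSubalgebra : LieSubalgebra R (Matrix ι ι R) :=
  lieSubalgebraOfSubalgebra R _ (blockTriangularSubalgebra R R id)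

@[simp]
lemma mem_upperTriangularLieSubalgebra {M : Matrix ι ι R} :
    M ∈ upperTriangularLieSubalgebra R ι ↔ M.IsUpperTriangular :=
  Iff.rfl

lemma single_mem_upperTriangularLieSubalgebra {i j : ι} (hij : i ≤ j) (c : R) :
    single i j c ∈ upperTriangularLieSubalgebra R ι :=
  blockTriangular_single hij c

lemma vecMulVec_single_top_mem_upperTriangularLieSubalgebra [OrderTop ι] (x : ι → R) :
    vecMulVec x (Pi.single ⊤ 1) ∈ upperTriangularLieSubalgebra R ι := fun i j hji ↦ by
  have : j ≠ ⊤ := (hji.trans_le le_top).ne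
  simp [vecMulVec_apply, this]

lemma vecMulVec_single_bot_mem_upperTriangularLieSubalgebra [OrderBot ι] (y : ι → R) :
    vecMulVec (Pi.single ⊥ 1) y ∈ upperTriangularLieSubalgebra R ι := fun i j hji ↦ by
  have : i ≠ ⊥ := (bot_le.trans_lt hji).ne'
  simp [vecMulVec_apply, this]

lemma IsUpperTriangular.mul_apply_self {M N : Matrix ι ι R} (hM : M.IsUpperTriangular)
    (hN : N.IsUpperTriangular) (i : ι) : (M * N) i i = M i i * N i i := by
  rw [mul_apply]
  refine Finset.sum_eq_single i (fun k _ hki ↦ ?_) (by simp)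
  rcases hki.lt_or_gt with hki | hik
  · rw [hM hki, zero_mul]
  · rw [hN hik, mul_zero]

end UpperTriangular

section Superdiagonal

variable {R : Type*} [CommRing R] {n : ℕ}

variable (R n) in
def superdiagonalSubmodule (k : ℕ) : Submodule R (Matrix (Fin n) (Fin n) R) where
  carrier := {M | ∀ i j : Fin n, (j : ℕ) < i + k → M i j = 0}
  add_mem' hM hN i j h := by simp [hM i j h, hN i j h]
  zero_mem' _ _ _ := rfl
  smul_mem' c M hM i j h := by simp [hM i j h]

lemma mem_superdiagonalSubmodule_zero {M : Matrix (Fin n) (Fin n) R} :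
    M ∈ superdiagonalSubmodule R n 0 ↔ M.IsUpperTriangular :=
  ⟨fun hM _ _ h ↦ hM _ _ h, fun hM _ _ h ↦ hM (Fin.lt_def.mpr h)⟩

lemma superdiagonalSubmodule_anti {d e : ℕ} (h : d ≤ e) :
    superdiagonalSubmodule R n e ≤ superdiagonalSubmodule R n d :=
  fun _ hM i j hij ↦ hM i j (by omega)

lemma superdiagonalSubmodule_self : superdiagonalSubmodule R n n = ⊥ :=
  (Submodule.eq_bot_iff _).mpr fun _ hM ↦ ext fun i j ↦ hM i j (by omega)

lemma mul_mem_superdiagonalSubmodule {d e : ℕ} {M N : Matrix (Fin n) (Fin n) R}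
    (hM : M ∈ superdiagonalSubmodule R n d) (hN : N ∈ superdiagonalSubmodule R n e) :
    M * N ∈ superdiagonalSubmodule R n (d + e) := fun i j hij ↦ by
  rw [mul_apply]
  refine Finset.sum_eq_zero fun k _ ↦ ?_
  by_cases hk : (k : ℕ) < i + d
  · rw [hM i k hk, zero_mul]
  · rw [hN k j (by omega), mul_zero]

lemma lie_mem_superdiagonalSubmodule_succ {k : ℕ} {M N : Matrix (Fin n) (Fin n) R}
    (hM : M ∈ superdiagonalSubmodule R n k) (hN : N ∈ superdiagonalSubmodule R n k) :
    ⁅M, N⁆ ∈ superdiagonalSubmodule R n (k + 1) := by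
  rw [Ring.lie_def]
  rcases Nat.eq_zero_or_pos k with rfl | hk
  · have hMN := mul_mem_superdiagonalSubmodule hM hN
    have hNM := mul_mem_superdiagonalSubmodule hN hM
    rw [mem_superdiagonalSubmodule_zero] at hM hN
    intro i j hij
    rcases (Nat.lt_succ_iff.mp hij).lt_or_eq with hji | hji
    · simp [hMN i j hji, hNM i j hji]
    · obtain rfl : j = i := Fin.ext hji
      simp [hM.mul_apply_self hN, hN.mul_apply_self hM, mul_comm]
  · exact superdiagonalSubmodule_anti (by omega) <| Submodule.sub_mem _
      (mul_mem_superdiagonalSubmodule hM hN) (mul_mem_superdiagonalSubmodule hN hM)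

instance isSolvable_upperTriangularLieSubalgebra :
    LieAlgebra.IsSolvable (upperTriangularLieSubalgebra R (Fin n)) := by
  let b := upperTriangularLieSubalgebra R (Fin n)
  refine LieAlgebra.isSolvable_of_lie_mem_succ
    (F := fun k ↦ (superdiagonalSubmodule R n k).comap (b.incl : b →ₗ[R] _)) ?_
    (fun k x hx y hy ↦ lie_mem_superdiagonalSubmodule_succ hx hy) (N := n) ?_
  · exact eq_top_iff.mpr fun x _ ↦ mem_superdiagonalSubmodule_zero.mpr x.2
  · simpa [superdiagonalSubmodule_self] using
      LinearMap.ker_eq_bot_of_injective Subtype.val_injective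

end Superdiagonal

section Maximal

variable {K ι : Type*} [Field K] [Fintype ι] [LinearOrder ι]

lemma single_mem_of_upperTriangularLieSubalgebra_le {c : LieSubalgebra K (Matrix ι ι K)}
    (hle : upperTriangularLieSubalgebra K ι ≤ c) {M : Matrix ι ι K} (hM : M ∈ c) {p q : ι}
    (hqp : q < p) (hMpq : M p q ≠ 0) : single p q 1 ∈ c := by
  have hdiag (i : ι) : single i i 1 ∈ c := hle (single_mem_upperTriangularLieSubalgebra le_rfl 1)
  have hpq : single p q (M p q) ∈ c := by
    have := c.lie_mem (hdiag p) (c.lie_mem hM (hdiag q))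
    rw [lie_single_self_lie_single_self hqp.ne'] at this
    exact (c.add_mem_iff_left (hle (single_mem_upperTriangularLieSubalgebra hqp.le _))).mp this
  simpa [smul_single, hMpq] using c.smul_mem (M p q)⁻¹ hpq

theorem eq_upperTriangularLieSubalgebra_of_isSolvable [NeZero (2 : K)]
    {c : LieSubalgebra K (Matrix ι ι K)} (hc : LieAlgebra.IsSolvable c)
    (hle : upperTriangularLieSubalgebra K ι ≤ c) : c = upperTriangularLieSubalgebra K ι := by
  refine le_antisymm (fun M hM ↦ ?_) hle
  by_contra hMb
  obtain ⟨p, q, hqp, hMpq⟩ : ∃ p q, q < p ∧ M p q ≠ 0 := by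
    simpa [BlockTriangular] using hMb
  have hmem {i j : ι} (hij : i ≤ j) : single i j 1 ∈ c :=
    hle (single_mem_upperTriangularLieSubalgebra hij 1)
  have he := single_mem_of_upperTriangularLieSubalgebra_le hle hM hqp hMpq
  exact ((isSl2Triple_single hqp.ne').lieSubalgebra (c.sub_mem (hmem le_rfl) (hmem le_rfl))
    he (hmem hqp.le)).not_isSolvable K hc

end Maximal

section OpenOrbit

variable {K ι : Type*} [Field K] [Fintype ι]

lemma exists_vecMulVec_add_vecMulVec [NeZero (2 : K)] {v a p u : ι → K} (hp : p ⬝ᵥ v = 1)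
    (hu : a ⬝ᵥ u = 1) (hav : a ⬝ᵥ v ≠ 0) (w r : ι → K) :
    ∃ x y : ι → K, ∃ s : K, (vecMulVec x p + vecMulVec u y) *ᵥ v + s • v = w ∧
      s • a - a ᵥ* (vecMulVec x p + vecMulVec u y) = r := by
  -- `s` is the value for which `y ⬝ᵥ v = 0`, so that `vecMulVec u y` does not move `v`
  set s := (r ⬝ᵥ v + a ⬝ᵥ w) / (2 * a ⬝ᵥ v)
  set x := w - s • v
  set y := s • a - r - (a ⬝ᵥ x) • p
  have hy : y ⬝ᵥ v = 0 := by
    simp only [y, x, sub_dotProduct, smul_dotProduct, dotProduct_sub, dotProduct_smul, hp,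
      smul_eq_mul, s]
    field_simp
    ring
  refine ⟨x, y, s, ?_, ?_⟩
  · simp [add_mulVec, vecMulVec_mulVec, hp, hy, x]
  · simp [vecMul_add, vecMul_vecMulVec, hu, y]

lemma dotProductEquiv_comp_mulVecLin [DecidableEq ι] (a : ι → K) (X : Matrix ι ι K) :
    dotProductEquiv K ι a ∘ₗ X.mulVecLin = dotProductEquiv K ι (a ᵥ* X) :=
  LinearMap.ext fun u ↦ dotProduct_mulVec a X u

variable [LinearOrder ι] [BoundedOrder ι]

-- The indicator of `{⊥, ⊤}` is `e_⊥* + e_⊤*` when `⊥ ≠ ⊤`, and still pairs to `1` with `e_⊤`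
-- when `⊥ = ⊤`.
theorem exists_mem_upperTriangularLieSubalgebra_mulVec_single_top [NeZero (2 : K)]
    (w : ι → K) (ψ : Module.Dual K (ι → K)) :
    ∃ X ∈ upperTriangularLieSubalgebra K ι, ∃ s : K,
      X *ᵥ Pi.single ⊤ 1 + s • Pi.single ⊤ 1 = w ∧
      s • dotProductEquiv K ι (({⊥, ⊤} : Set ι).indicator 1) -
        dotProductEquiv K ι (({⊥, ⊤} : Set ι).indicator 1) ∘ₗ X.mulVecLin = ψ := by
  obtain ⟨x, y, s, hw, hψ⟩ := exists_vecMulVec_add_vecMulVec (v := Pi.single ⊤ 1)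
    (a := ({⊥, ⊤} : Set ι).indicator 1) (p := Pi.single ⊤ 1) (u := Pi.single ⊥ 1) (by simp)
    (by simp) (by simp) w ((dotProductEquiv K ι).symm ψ)
  refine ⟨_, add_mem (vecMulVec_single_top_mem_upperTriangularLieSubalgebra x)
    (vecMulVec_single_bot_mem_upperTriangularLieSubalgebra y), s, hw, ?_⟩
  rw [dotProductEquiv_comp_mulVecLin, ← map_smul, ← map_sub, hψ, LinearEquiv.apply_symm_apply]

end OpenOrbit

end Matrix

/-- There exist a Borel subalgebra `b` of `gl(n,ℂ)` (a maximal solvable Lie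
subalgebra), `v ∈ ℂⁿ` and `φ ∈ (ℂⁿ)*` such that
`{(Xv + s•v, -φ∘X + s•φ) : X ∈ b, s ∈ ℂ} = ℂⁿ ⊕ (ℂⁿ)*`. -/
theorem stmt9 (n : ℕ) (hn : 1 ≤ n) :
    ∃ b : LieSubalgebra ℂ (Matrix (Fin n) (Fin n) ℂ),
      LieAlgebra.IsSolvable b ∧
      (∀ c : LieSubalgebra ℂ (Matrix (Fin n) (Fin n) ℂ),
        LieAlgebra.IsSolvable c → b ≤ c → c = b) ∧
      ∃ (v : Fin n → ℂ) (φ : (Fin n → ℂ) →ₗ[ℂ] ℂ),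
        ∀ (w : Fin n → ℂ) (ψ : (Fin n → ℂ) →ₗ[ℂ] ℂ),
          ∃ X ∈ b, ∃ s : ℂ,
            X.mulVec v + s • v = w ∧ s • φ - φ ∘ₗ X.mulVecLin = ψ := by
  have : NeZero n := ⟨by omega⟩
  exact ⟨Matrix.upperTriangularLieSubalgebra ℂ (Fin n), inferInstance,
    fun _ ↦ Matrix.eq_upperTriangularLieSubalgebra_of_isSolvable, _, _,
    Matrix.exists_mem_upperTriangularLieSubalgebra_mulVec_single_top⟩
end
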